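/- arXiv:2309.11629 — 5 statements merged into one kernel-verified Lean document; each statement's English description precedes it below -/
import Mathlib

section
/- Let g(t) = Σ_λ c_λ λ^t be a finite sum over modes λ ∈ [0,1) with real coefficients c_λ. Let Λ₊ = {λ : c_λ ≥ 0} and Λ₋ = {λ : c_λ < 0}. If (1) max_{λ∈Λ₊} λ ≤ min_{λ∈Λ₋} λ, (2) Σ_λ c_λ > 0, and (3) there exists τ₀ with g(τ₀) ≤ 0, then g is a linearly progressing opponent process with α = min_{λ∈Λ₋} λ. -/
def IsOpponent (g : ℕ → ℝ) (τ₀ : ℕ) : Prop :=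
  (∀ τ, τ < τ₀ → 0 < g τ) ∧ (∀ τ, τ₀ ≤ τ → g τ ≤ 0)

def IsLPOP (g : ℕ → ℝ) (τ₀ : ℕ) (α : ℝ) : Prop :=
  0 ≤ α ∧ α < 1 ∧
  (∀ t, t < τ₀ - 1 → g (t + 1) ≤ α * g t) ∧
  (∀ t, τ₀ ≤ t → α * |g t| ≤ |g (t + 1)|)

/-- a finite exponential sum `g(t) = Σ_i c_i λ_i^t` with modes in `[0,1)`,
whose positive modes are all at most its negative modes, with positive total coefficient
and some nonpositive value, is an LPOP with `α = min_{i ∈ Λ₋} λ_i`. -/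
theorem exp_sum_is_LPOP {ι : Type*} (S : Finset ι) (lam c : ι → ℝ)
    (hlam : ∀ i ∈ S, lam i ∈ Set.Ico (0 : ℝ) 1)
    (g : ℕ → ℝ) (hg : ∀ t, g t = ∑ i ∈ S, c i * lam i ^ t)
    (α : ℝ)
    -- `α` is the minimum of the modes with negative coefficients (Λ₋ nonempty)
    (hα : IsLeast {x : ℝ | ∃ i ∈ S, c i < 0 ∧ lam i = x} α)
    -- (1) every positive mode is at most every negative mode
    (hmaxmin : ∀ i ∈ S, 0 ≤ c i → lam i ≤ α)
    -- (2) positive total coefficient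
    (hsum : 0 < ∑ i ∈ S, c i)
    -- (3) `g` is eventually nonpositive
    (hτ : ∃ τ, g τ ≤ 0) :
    ∃ τ₀, IsOpponent g τ₀ ∧ IsLPOP g τ₀ α := by
  obtain ⟨i0, hi0S, hci0, hlam0⟩ := hα.1
  have hα01 : α ∈ Set.Ico (0:ℝ) 1 := hlam0 ▸ hlam i0 hi0S
  have hstep : ∀ t, g (t + 1) ≤ α * g t := by
    intro t
    rw [hg, hg, Finset.mul_sum]
    apply Finset.sum_le_sum
    intro i hi
    have h0 : 0 ≤ lam i := (hlam i hi).1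
    have hpow : (0:ℝ) ≤ lam i ^ t := pow_nonneg h0 t
    rw [pow_succ]
    rcases le_or_gt 0 (c i) with hc | hc
    · have hle := hmaxmin i hi hc
      nlinarith [mul_nonneg hc hpow]
    · have hαle : α ≤ lam i := hα.2 ⟨i, hi, hc, rfl⟩
      nlinarith [mul_nonpos_of_nonpos_of_nonneg hc.le hpow]
  have hτ' := hτ
  classical
  refine ⟨Nat.find hτ, ⟨?_, ?_⟩, hα01.1, hα01.2, fun t _ => hstep t, ?_⟩
  · intro τ hτlt
    exact lt_of_not_ge (Nat.find_min hτ hτlt)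
  · intro τ hle
    obtain ⟨n, rfl⟩ := Nat.exists_eq_add_of_le hle
    induction n with
    | zero => exact Nat.find_spec hτ
    | succ n ih =>
      have := hstep (Nat.find hτ + n)
      have h2 := ih (Nat.le_add_right _ _)
      have : g (Nat.find hτ + n + 1) ≤ 0 :=
        le_trans this (mul_nonpos_of_nonneg_of_nonpos hα01.1 h2)
      exact this
  · intro t ht
    have h1 : g t ≤ 0 := by
      obtain ⟨n, rfl⟩ := Nat.exists_eq_add_of_le ht
      induction n with
      | zero => exact Nat.find_spec hτ
      | succ n ih =>
        have h2 := ih (Nat.le_add_right _ _)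
        have := le_trans (hstep (Nat.find hτ + n))
          (mul_nonpos_of_nonneg_of_nonpos hα01.1 h2)
        exact this
    have h2 : g (t + 1) ≤ 0 :=
      le_trans (hstep t) (mul_nonpos_of_nonneg_of_nonpos hα01.1 h1)
    rw [abs_of_nonpos h1, abs_of_nonpos h2]
    nlinarith [hstep t, hα01.1]
end

section
/- For any LPOP g and any natural progression y^nat, the greedy policy that takes the minimum effective dose at every time step satisfies y_t ≥ y_min for all t with minimal cumulative dose: for any other dosing sequence (u'_t) with Σ_t u'_t < Σ_t u_t^MED that satisfies the constraints up to some time t₀ but is not the MED at t₀, there exists a modified dosing sequence satisfying the constraints with strictly smaller cumulative dose. Equivalently: if a dosing sequence (u*_t) achieves y*_t ≥ y_min for all t with minimal cumulative dose, then u*_t is the MED at every t. -/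
/-- Well-being dynamics: `y_{t+1} = Σ_{k=0}^{t} g(k)·u_{t-k} + y^nat_{t+1}`, `y_0 = y^nat_0`. -/
noncomputable def wb (g u ynat : ℕ → ℝ) : ℕ → ℝ
  | 0 => ynat 0
  | t + 1 => (∑ k ∈ Finset.range (t + 1), g k * u (t - k)) + ynat (t + 1)

lemma g_step (g : ℕ → ℝ) (τ₀ : ℕ) (α : ℝ)
    (hopp : IsOpponent g τ₀) (hlpop : IsLPOP g τ₀ α) (k : ℕ) :
    g (k + 1) ≤ α * g k := by
  obtain ⟨hpos, hnpos⟩ := hopp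
  obtain ⟨hα0, hα1, h1, h2⟩ := hlpop
  by_cases hk : k < τ₀ - 1
  · exact h1 k hk
  by_cases hk2 : τ₀ ≤ k
  · have h := h2 k hk2
    have hg1 : g (k+1) ≤ 0 := hnpos _ (by omega)
    have hg0 : g k ≤ 0 := hnpos _ hk2
    rw [abs_of_nonpos hg0, abs_of_nonpos hg1] at h
    linarith
  · have hkτ : k < τ₀ := by omega
    have hg1 : g (k+1) ≤ 0 := hnpos _ (by omega)
    have hg0 : 0 < g k := hpos _ hkτ
    nlinarith

lemma wb_diff (g u u' ynat : ℕ → ℝ) (s : ℕ) :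
    wb g u' ynat (s+1) =
      wb g u ynat (s+1) + ∑ j ∈ Finset.range (s+1), g (s-j) * (u' j - u j) := by
  simp only [wb]
  have h : ∑ j ∈ Finset.range (s+1), g (s-j) * (u' j - u j)
      = ∑ k ∈ Finset.range (s+1), g k * (u' (s-k) - u (s-k)) := by
    rw [← Finset.sum_range_reflect (fun j => g (s-j) * (u' j - u j)) (s+1)]
    apply Finset.sum_congr rfl
    intro k hk
    simp only [Finset.mem_range] at hk
    have h1 : s + 1 - 1 - k = s - k := by omega
    have h2 : s - (s - k) = k := by omega
    rw [h1, h2]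
  rw [h]
  have h2 : ∑ k ∈ Finset.range (s+1), g k * (u' (s-k) - u (s-k))
      = (∑ k ∈ Finset.range (s+1), g k * u' (s-k))
        - ∑ k ∈ Finset.range (s+1), g k * u (s-k) := by
    rw [← Finset.sum_sub_distrib]
    exact Finset.sum_congr rfl (fun k _ => by ring)
  rw [h2]; ring

/-- (optimality of the MED) for any LPOP `g` and any natural progression,
if a nonnegative dosing sequence `u` keeps `y_t ≥ y_min` for `t = 1,…,T` with minimal
cumulative dose `Σ_{t<T} u_t`, then `u_t` is the minimum effective dose at every `t < T`,
i.e. it either leads to `y_{t+1} = y_min` or equals `0`. -/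
theorem med_optimal (g ynat : ℕ → ℝ) (τ₀ : ℕ) (α : ℝ)
    (hopp : IsOpponent g τ₀) (hlpop : IsLPOP g τ₀ α)
    (ymin : ℝ) (T : ℕ) (u : ℕ → ℝ)
    (hnn : ∀ t, 0 ≤ u t)
    (hfeas : ∀ t, 1 ≤ t → t ≤ T → ymin ≤ wb g u ynat t)
    (hopt : ∀ u' : ℕ → ℝ, (∀ t, 0 ≤ u' t) →
      (∀ t, 1 ≤ t → t ≤ T → ymin ≤ wb g u' ynat t) →
      ∑ t ∈ Finset.range T, u t ≤ ∑ t ∈ Finset.range T, u' t) :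
    ∀ t < T, wb g u ynat (t + 1) = ymin ∨ u t = 0 := by
  have hα0 : 0 ≤ α := hlpop.1
  have hα1 : α < 1 := hlpop.2.1
  intro t ht
  by_contra hcon
  push_neg at hcon
  obtain ⟨hne, hu0⟩ := hcon
  have hwb : ymin ≤ wb g u ynat (t+1) := hfeas (t+1) (by omega) (by omega)
  have hwb' : ymin < wb g u ynat (t+1) := lt_of_le_of_ne hwb (Ne.symm hne)
  have hut : 0 < u t := (hnn t).lt_of_ne (Ne.symm hu0)
  set δ := wb g u ynat (t+1) - ymin with hδ
  have hδpos : 0 < δ := by simp only [hδ]; linarith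
  set M := max (g 0) 1 with hM
  have hM1 : (1:ℝ) ≤ M := le_max_right _ _
  set ε := min (u t) (δ / M) with hε
  have hεpos : 0 < ε := lt_min hut (div_pos hδpos (by linarith))
  have hεu : ε ≤ u t := min_le_left _ _
  have hεg : ε * g 0 ≤ δ := by
    calc ε * g 0 ≤ ε * M := mul_le_mul_of_nonneg_left (le_max_left _ _) hεpos.le
      _ ≤ (δ / M) * M := mul_le_mul_of_nonneg_right (min_le_right _ _) (by linarith)
      _ = δ := div_mul_cancel₀ _ (by linarith)
  set u' : ℕ → ℝ := fun s => if s = t then u t - ε else if s = t+1 then u (t+1) + α*ε else u s with hu'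
  have hd : ∀ j, u' j - u j = if j = t then -ε else if j = t+1 then α*ε else 0 := by
    intro j
    simp only [hu']
    by_cases h1 : j = t
    · simp [h1]
    · by_cases h2 : j = t+1 <;> simp [h1, h2]
  -- wb difference at time s+1
  have hdiff : ∀ s, wb g u' ynat (s+1) = wb g u ynat (s+1) +
      ∑ j ∈ Finset.range (s+1), g (s-j) * (if j = t then -ε else if j = t+1 then α*ε else 0) := by
    intro s
    rw [wb_diff g u u' ynat s]
    congr 1
    exact Finset.sum_congr rfl (fun j _ => by rw [hd j])
  have hnn' : ∀ s, 0 ≤ u' s := by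
    intro s
    simp only [hu']
    split_ifs with h1 h2
    · linarith
    · have := hnn (t+1); nlinarith
    · exact hnn s
  have hfeas' : ∀ s, 1 ≤ s → s ≤ T → ymin ≤ wb g u' ynat s := by
    intro s hs1 hsT
    obtain ⟨r, rfl⟩ : ∃ r, s = r + 1 := ⟨s - 1, by omega⟩
    have hbase : ymin ≤ wb g u ynat (r+1) := hfeas (r+1) hs1 hsT
    rw [hdiff r]
    rcases lt_trichotomy r t with hrt | hrt | hrt
    · -- all correction terms vanish
      have hz : ∑ j ∈ Finset.range (r+1), g (r-j) *
          (if j = t then -ε else if j = t+1 then α*ε else 0) = 0 := by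
        apply Finset.sum_eq_zero
        intro j hj
        simp only [Finset.mem_range] at hj
        have h1 : j ≠ t := by omega
        have h2 : j ≠ t+1 := by omega
        simp [h1, h2]
      rw [hz]; linarith
    · -- r = t : correction is -ε * g 0
      have hmem : t ∈ Finset.range (r+1) := by simp [hrt]
      have hz : (∑ j ∈ Finset.range (r+1), g (r-j) *
          (if j = t then -ε else if j = t+1 then α*ε else 0)) = g (r-t) * (-ε) := by
        rw [Finset.sum_eq_single_of_mem t hmem]
        · simp
        · intro j hj hjt
          simp only [Finset.mem_range] at hj
          have h2 : j ≠ t+1 := by omega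
          simp [hjt, h2]
      have hrt0 : r - t = 0 := by omega
      rw [hz, hrt0, hrt]
      have hδ2 : δ = wb g u ynat (t+1) - ymin := hδ
      nlinarith
    · -- r > t : correction = -ε g (r-t) + α ε g (r-t-1) ≥ 0
      have hsub : ({t, t+1} : Finset ℕ) ⊆ Finset.range (r+1) := by
        intro x hx
        simp only [Finset.mem_insert, Finset.mem_singleton] at hx
        simp only [Finset.mem_range]
        omega
      have hz : ∑ j ∈ Finset.range (r+1), g (r-j) *
          (if j = t then -ε else if j = t+1 then α*ε else 0)
          = ∑ j ∈ ({t, t+1} : Finset ℕ), g (r-j) *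
          (if j = t then -ε else if j = t+1 then α*ε else 0) := by
        symm
        apply Finset.sum_subset hsub
        intro j _ hj
        simp only [Finset.mem_insert, Finset.mem_singleton, not_or] at hj
        simp [hj.1, hj.2]
      have ht1 : (t+1 : ℕ) ≠ t := by omega
      have hpair : ∑ j ∈ ({t, t+1} : Finset ℕ), g (r-j) *
          (if j = t then -ε else if j = t+1 then α*ε else 0)
          = g (r-t) * (-ε) + g (r-(t+1)) * (α*ε) := by
        rw [Finset.sum_pair (by omega : t ≠ t+1)]
        simp [ht1]
      rw [hz, hpair]
      have hkey : g (r - t) ≤ α * g (r - t - 1) := by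
        have h5 : r - t = (r - t - 1) + 1 := by omega
        rw [h5]
        exact g_step g τ₀ α hopp hlpop (r - t - 1)
      have hr1 : r - (t+1) = r - t - 1 := by omega
      rw [hr1]
      nlinarith
  have hle := hopt u' hnn' hfeas'
  have hsum : ∑ s ∈ Finset.range T, u' s < ∑ s ∈ Finset.range T, u s := by
    have hsplit : ∑ s ∈ Finset.range T, u' s = ∑ s ∈ Finset.range T, u s +
        ∑ s ∈ Finset.range T, (if s = t then -ε else if s = t+1 then α*ε else 0) := by
      rw [← Finset.sum_add_distrib]
      apply Finset.sum_congr rfl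
      intro s _
      have := hd s
      linarith
    rw [hsplit]
    have hbound : ∑ s ∈ Finset.range T, (if s = t then -ε else if s = t+1 then α*ε else 0)
        ≤ -ε + α*ε := by
      by_cases hT : t+1 < T
      · have hsub : ({t, t+1} : Finset ℕ) ⊆ Finset.range T := by
          intro x hx
          simp only [Finset.mem_insert, Finset.mem_singleton] at hx
          simp only [Finset.mem_range]; omega
        have hz : ∑ s ∈ Finset.range T, (if s = t then -ε else if s = t+1 then α*ε else 0)
            = ∑ s ∈ ({t, t+1} : Finset ℕ), (if s = t then -ε else if s = t+1 then α*ε else 0) := by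
          symm
          apply Finset.sum_subset hsub
          intro j _ hj
          simp only [Finset.mem_insert, Finset.mem_singleton, not_or] at hj
          simp [hj.1, hj.2]
        rw [hz, Finset.sum_pair (by omega : t ≠ t+1)]
        have ht1 : (t+1 : ℕ) ≠ t := by omega
        simp [if_pos rfl, if_neg ht1]
      · have hT' : T = t+1 := by omega
        subst hT'
        have hz : ∑ s ∈ Finset.range (t+1), (if s = t then -ε else if s = t+1 then α*ε else 0)
            = -ε := by
          rw [Finset.sum_eq_single_of_mem t (Finset.self_mem_range_succ t)]
          · simp
          · intro j hj hjt
            simp only [Finset.mem_range] at hj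
            have h2 : j ≠ t+1 := by omega
            simp [hjt, h2]
        rw [hz]
        nlinarith
    nlinarith
  linarith
end

section
/- Key step in the optimality of the MED: if g is an LPOP with constant α ∈ [0,1), and a feasible dosing sequence u* is modified at times t₀ and t₀+1 by u'_{t₀} = u*_{t₀} − ε and u'_{t₀+1} = u*_{t₀+1} + αε (unchanged elsewhere), with ε > 0 small enough that the constraint at t₀+1 remains satisfied, then for all t > t₀ the modified well-being satisfies y'_{t+1} = y*_{t+1} − g(t−t₀)ε + g(t−t₀−1)αε ≥ y*_{t+1}, and the modified cumulative dose is strictly smaller than the original. -/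
/-- key perturbation step in the MED optimality proof.  Modifying a feasible
dosing sequence by `u'_{t₀} = u*_{t₀} − ε`, `u'_{t₀+1} = u*_{t₀+1} + αε` (ε small enough that
the constraint at `t₀+1` still holds): for all `t > t₀`,
`y'_{t+1} = y*_{t+1} − g(t−t₀)ε + g(t−t₀−1)αε ≥ y*_{t+1}` — in particular
`α·g(t−t₀−1) − g(t−t₀) ≥ 0` — and the cumulative dose strictly decreases. -/
theorem med_perturbation (g ynat : ℕ → ℝ) (τ₀ : ℕ) (α : ℝ)
    (hopp : IsOpponent g τ₀) (hlpop : IsLPOP g τ₀ α)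
    (ymin ε : ℝ) (hε : 0 < ε)
    (ustar u' : ℕ → ℝ) (t₀ : ℕ)
    (hnn : ∀ t, 0 ≤ ustar t)
    (hu' : ∀ t, u' t = if t = t₀ then ustar t₀ - ε
      else if t = t₀ + 1 then ustar (t₀ + 1) + α * ε else ustar t)
    (hcon : ymin ≤ wb g u' ynat (t₀ + 1)) :
    (∀ s : ℕ, 0 ≤ α * g s - g (s + 1)) ∧
    (∀ t, t₀ < t →
      wb g u' ynat (t + 1)
        = wb g ustar ynat (t + 1) - g (t - t₀) * ε + g (t - t₀ - 1) * (α * ε) ∧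
      wb g ustar ynat (t + 1) ≤ wb g u' ynat (t + 1)) ∧
    (∀ T, t₀ + 1 < T →
      ∑ t ∈ Finset.range T, u' t < ∑ t ∈ Finset.range T, ustar t) := by
  obtain ⟨hpos, hnonpos⟩ := hopp
  obtain ⟨hα0, hα1, hlt, hge⟩ := hlpop
  have key : ∀ s : ℕ, 0 ≤ α * g s - g (s + 1) := by
    intro s
    rcases lt_trichotomy (s + 1) τ₀ with h | h | h
    · have := hlt s (by omega)
      linarith
    · have h1 : g (s + 1) ≤ 0 := hnonpos _ (by omega)
      have h2 : 0 < g s := hpos s (by omega)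
      nlinarith
    · have hs : τ₀ ≤ s := by omega
      have h1 : g s ≤ 0 := hnonpos s hs
      have h2 : g (s + 1) ≤ 0 := hnonpos _ (by omega)
      have h3 := hge s hs
      rw [abs_of_nonpos h1, abs_of_nonpos h2] at h3
      linarith
  have hδ : ∀ j, u' j = ustar j +
      ((if j = t₀ then -ε else 0) + (if j = t₀ + 1 then α * ε else 0)) := by
    intro j
    rw [hu' j]
    by_cases h1 : j = t₀
    · subst h1
      simp
      ring
    · by_cases h2 : j = t₀ + 1
      · subst h2
        simp [h1]
      · simp [h1, h2]
  refine ⟨key, ?_, ?_⟩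
  · intro t ht
    have hsum : (∑ k ∈ Finset.range (t + 1), g k * u' (t - k))
        = (∑ k ∈ Finset.range (t + 1), g k * ustar (t - k))
          - g (t - t₀) * ε + g (t - t₀ - 1) * (α * ε) := by
      have e1 : ∀ k ∈ Finset.range (t + 1),
          g k * u' (t - k) = g k * ustar (t - k)
            + ((if k = t - t₀ then g k * (-ε) else 0)
              + (if k = t - t₀ - 1 then g k * (α * ε) else 0)) := by
        intro k hk
        have hk' : k ≤ t := by
          have := Finset.mem_range.mp hk; omega
        have c1 : (t - k = t₀) ↔ (k = t - t₀) := by omega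
        have c2 : (t - k = t₀ + 1) ↔ (k = t - t₀ - 1) := by omega
        rw [hδ (t - k)]
        simp only [c1, c2]
        split_ifs with h1 h2 h2 <;> first | omega | ring
      rw [Finset.sum_congr rfl e1]
      rw [Finset.sum_add_distrib, Finset.sum_add_distrib,
        Finset.sum_ite_eq' (Finset.range (t + 1)) (t - t₀) (fun k => g k * (-ε)),
        Finset.sum_ite_eq' (Finset.range (t + 1)) (t - t₀ - 1) (fun k => g k * (α * ε))]
      have m1 : t - t₀ ∈ Finset.range (t + 1) := Finset.mem_range.mpr (by omega)
      have m2 : t - t₀ - 1 ∈ Finset.range (t + 1) := Finset.mem_range.mpr (by omega)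
      rw [if_pos m1, if_pos m2]
      ring
    have heq : wb g u' ynat (t + 1)
        = wb g ustar ynat (t + 1) - g (t - t₀) * ε + g (t - t₀ - 1) * (α * ε) := by
      simp only [wb]
      linarith [hsum]
    refine ⟨heq, ?_⟩
    have hk := key (t - t₀ - 1)
    have : t - t₀ - 1 + 1 = t - t₀ := by omega
    rw [this] at hk
    nlinarith [hk, hε.le]
  · intro T hT
    have e1 : ∀ k ∈ Finset.range T,
        u' k = ustar k + ((if k = t₀ then -ε else 0) + (if k = t₀ + 1 then α * ε else 0)) :=
      fun k _ => hδ k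
    rw [Finset.sum_congr rfl e1, Finset.sum_add_distrib, Finset.sum_add_distrib,
      Finset.sum_ite_eq' (Finset.range T) t₀ (fun _ => -ε),
      Finset.sum_ite_eq' (Finset.range T) (t₀ + 1) (fun _ => α * ε),
      if_pos (Finset.mem_range.mpr (by omega : t₀ < T)),
      if_pos (Finset.mem_range.mpr (by omega : t₀ + 1 < T))]
    nlinarith
end

section
/- For an LPOP g, if the dose at each time t is u_t = max{0, (y_min − y^{nat,lb}_{t+1} − Σ_{k=1}^{t} g(k)·u_{t−k}) / g(0)}, where y^{nat,lb} is a pointwise lower bound on the true natural progression (y^nat_t ≥ y^{nat,lb}_t for all t), then the resulting well-being satisfies y_t ≥ y_min for all t ≥ 1. -/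
/-- if doses are given recursively by
`u_t = max{0, (y_min − y^{nat,lb}_{t+1} − Σ_{k=1}^{t} g(k)·u_{t−k}) / g(0)}` for an LPOP `g`
(in particular `g(0) > 0`), where `y^{nat,lb}` is a pointwise lower bound on the true natural
progression, then the resulting well-being satisfies `y_t ≥ y_min` for all `t ≥ 1`. -/
theorem lower_bound_protocol_feasible (g ynat ylb : ℕ → ℝ) (τ₀ : ℕ) (α : ℝ)
    (hopp : IsOpponent g τ₀) (hlpop : IsLPOP g τ₀ α) (hτ₀ : 0 < τ₀)
    (hlb : ∀ t, ylb t ≤ ynat t)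
    (ymin : ℝ) (u : ℕ → ℝ)
    (hu : ∀ t, u t =
      max 0 ((ymin - ylb (t + 1) - ∑ k ∈ Finset.Icc 1 t, g k * u (t - k)) / g 0)) :
    ∀ t, 1 ≤ t → ymin ≤ wb g u ynat t := by
  intro t ht
  obtain ⟨s, rfl⟩ : ∃ s, t = s + 1 := ⟨t - 1, by omega⟩
  have hg0 : 0 < g 0 := hopp.1 0 hτ₀
  have hsplit : (∑ k ∈ Finset.range (s + 1), g k * u (s - k)) =
      g 0 * u s + ∑ k ∈ Finset.Icc 1 s, g k * u (s - k) := by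
    rw [Finset.sum_range_succ', ← Finset.Ico_add_one_right_eq_Icc, Finset.sum_Ico_eq_sum_range]
    simp [add_comm]
  have hus : (ymin - ylb (s + 1) - ∑ k ∈ Finset.Icc 1 s, g k * u (s - k)) / g 0 ≤ u s := by
    rw [hu s]; exact le_max_right _ _
  have := (div_le_iff₀ hg0).mp hus
  show ymin ≤ (∑ k ∈ Finset.range (s + 1), g k * u (s - k)) + ynat (s + 1)
  rw [hsplit]
  have := hlb (s + 1)
  nlinarith [this]
end

section
/- Instance-wise constraint deviation under integral control: suppose doses follow u_t = max{0, u_{t−1} − K₊·(y_t − y_min)₊ − K₋·(y_t − y_min)₋} with convention u_{−1} = 0, where (x)₊ = max(x,0), (x)₋ = min(x,0), and the gains satisfy K₊ ≤ g(0)^{−1} ≤ K₋. Then for every t ≥ 0, y_{t+1} ≥ y_min + (y^nat_{t+1} − y^nat_t) − Σ_{k=1}^{t} g(k)·(u_{t−k−1} − u_{t−k}). -/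
/-- `prevd u n` is `u_{n-1}`, with the convention `u_{-1} = 0`. -/
def prevd (u : ℕ → ℝ) : ℕ → ℝ := fun n => if n = 0 then 0 else u (n - 1)

lemma sum_Icc_shift (f : ℕ → ℝ) (t : ℕ) :
    ∑ k ∈ Finset.Icc 1 t, f k = ∑ j ∈ Finset.range t, f (j + 1) := by
  rw [show Finset.Icc 1 t = Finset.Ico 1 (t+1) by rw [Finset.Ico_add_one_right_eq_Icc],
    Finset.sum_Ico_eq_sum_range]
  simp [add_comm]

lemma wb_eq (g u ynat : ℕ → ℝ) (t : ℕ) :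
    wb g u ynat t
      = g 0 * prevd u t + (∑ j ∈ Finset.range t, g (j + 1) * prevd u (t - (j + 1)))
        + ynat t := by
  cases t with
  | zero => simp [wb, prevd]
  | succ t =>
    rw [wb, Finset.sum_range_succ']
    rw [Finset.sum_range_succ (fun j => g (j + 1) * prevd u (t + 1 - (j + 1)))]
    have h0 : prevd u (t + 1 - (t + 1)) = 0 := by simp [prevd]
    have h1 : prevd u (t + 1) = u t := by simp [prevd]
    have h2 : ∀ j ∈ Finset.range t, g (j + 1) * prevd u (t + 1 - (j + 1))
        = g (j + 1) * u (t - (j + 1)) := by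
      intro j hj
      simp only [Finset.mem_range] at hj
      have : t + 1 - (j + 1) = t - j := by omega
      rw [this]
      have hne : t - j ≠ 0 := by omega
      have : (t - j) - 1 = t - (j + 1) := by omega
      simp [prevd, hne, this]
    rw [Finset.sum_congr rfl h2, h0, h1]
    simp only [Nat.sub_zero, mul_zero, add_zero]
    ring

lemma key_ineq (g ynat : ℕ → ℝ) (hg0 : 0 < g 0) (ymin Kp Km : ℝ)
    (hKp : Kp ≤ (g 0)⁻¹) (hKm : (g 0)⁻¹ ≤ Km) (u : ℕ → ℝ)
    (hu : ∀ t, u t = max 0 (prevd u t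
      - Kp * max (wb g u ynat t - ymin) 0 - Km * min (wb g u ynat t - ymin) 0))
    (t : ℕ) :
    g 0 * prevd u t - (wb g u ynat t - ymin) ≤ g 0 * u t := by
  set d := wb g u ynat t - ymin with hd
  have h1 : g 0 * Kp ≤ 1 := by
    have := mul_le_mul_of_nonneg_left hKp hg0.le
    rwa [mul_inv_cancel₀ hg0.ne'] at this
  have h2 : 1 ≤ g 0 * Km := by
    have := mul_le_mul_of_nonneg_left hKm hg0.le
    rwa [mul_inv_cancel₀ hg0.ne'] at this
  have h3 : prevd u t - Kp * max d 0 - Km * min d 0 ≤ u t := by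
    rw [hu t]; exact le_max_right _ _
  have hM : 0 ≤ max d 0 := le_max_right d 0
  have hm : min d 0 ≤ 0 := min_le_right d 0
  have h4 : max d 0 + min d 0 = d := by simp [max_add_min d 0]
  have e1 : g 0 * (Kp * max d 0) ≤ max d 0 := by nlinarith
  have e2 : g 0 * (Km * min d 0) ≤ min d 0 := by nlinarith
  have h5 : g 0 * (prevd u t - Kp * max d 0 - Km * min d 0) ≤ g 0 * u t :=
    mul_le_mul_of_nonneg_left h3 hg0.le
  nlinarith

/-- instance-wise constraint deviation under clipped integral control
`u_t = max{0, u_{t−1} − K₊·(y_t − y_min)₊ − K₋·(y_t − y_min)₋}` with `u_{−1} = 0` and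
gains `K₊ ≤ g(0)⁻¹ ≤ K₋`:
`y_{t+1} ≥ y_min + (y^nat_{t+1} − y^nat_t) − Σ_{k=1}^{t} g(k)·(u_{t−k−1} − u_{t−k})`. -/
theorem integral_control_instancewise (g ynat : ℕ → ℝ) (hg0 : 0 < g 0)
    (ymin Kp Km : ℝ) (hKp : Kp ≤ (g 0)⁻¹) (hKm : (g 0)⁻¹ ≤ Km)
    (u : ℕ → ℝ)
    (hu : ∀ t, u t = max 0 (prevd u t
      - Kp * max (wb g u ynat t - ymin) 0 - Km * min (wb g u ynat t - ymin) 0)) :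
    ∀ t : ℕ,
      ymin + (ynat (t + 1) - ynat t)
        - ∑ k ∈ Finset.Icc 1 t, g k * (prevd u (t - k) - u (t - k))
      ≤ wb g u ynat (t + 1) := by
  intro t
  have hk := key_ineq g ynat hg0 ymin Kp Km hKp hKm u hu t
  have hwt := wb_eq g u ynat t
  have hwt1 : wb g u ynat (t + 1)
      = (∑ j ∈ Finset.range t, g (j + 1) * u (t - (j + 1))) + g 0 * u t
        + ynat (t + 1) := by
    rw [wb, Finset.sum_range_succ']
    simp
  rw [sum_Icc_shift (fun k => g k * (prevd u (t - k) - u (t - k))) t]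
  have hsplit : ∑ j ∈ Finset.range t, g (j + 1) * (prevd u (t - (j + 1)) - u (t - (j + 1)))
      = (∑ j ∈ Finset.range t, g (j + 1) * prevd u (t - (j + 1)))
        - ∑ j ∈ Finset.range t, g (j + 1) * u (t - (j + 1)) := by
    rw [← Finset.sum_sub_distrib]
    exact Finset.sum_congr rfl fun j _ => by ring
  rw [hwt1]
  simp only [hsplit]
  linarith
end
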